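/- Under the assumptions of Problem 2, i.e. assuming z ∈ ran( ∂f + Σ_{i=1}^m L_i^* (∂g_i □ ∂ℓ_i)(L_i · − r_i) + ∇h ), the set zer(A+B) is nonempty, where A : 𝒦 → 2^𝒦 is defined by A(x, v_1,…,v_m) = ( ∂f(x) − z + Σ_{i=1}^m L_i^* v_i ) × ∏_{i=1}^m ( −L_i x + ∂g_i^*(v_i) + r_i ) and B : 𝒦 → 𝒦 by B(x, v_1,…,v_m) = ( ∇h(x), ∇ℓ_1^*(v_1), …, ∇ℓ_m^*(v_m) ) on 𝒦 = ℋ ⊕ 𝒢_1 ⊕ ⋯ ⊕ 𝒢_m. -/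

import Mathlib

open scoped RealInnerProductSpace

noncomputable section

variable {E : Type*} [NormedAddCommGroup E] [InnerProductSpace ℝ E]

/-- The class Γ₀ : proper, lower semicontinuous, convex functions with values in ]-∞,+∞]. -/
def Gamma0 (f : E → EReal) : Prop :=
  (∃ x, f x ≠ ⊤) ∧ (∀ x, f x ≠ ⊥) ∧ LowerSemicontinuous f ∧
    ∀ x y : E, ∀ t : ℝ, 0 ≤ t → t ≤ 1 →
      f (t • x + (1 - t) • y) ≤ (t : EReal) * f x + ((1 - t : ℝ) : EReal) * f y

/-- Strong convexity (with some modulus σ > 0) for `EReal`-valued functions. -/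
def StronglyConvexE (f : E → EReal) : Prop :=
  ∃ σ : ℝ, 0 < σ ∧ ∀ x y : E, ∀ t : ℝ, 0 ≤ t → t ≤ 1 →
    f (t • x + (1 - t) • y) + ((σ / 2 * t * (1 - t) * ‖x - y‖ ^ 2 : ℝ) : EReal)
      ≤ (t : EReal) * f x + ((1 - t : ℝ) : EReal) * f y

/-- The subdifferential of `f` at `x`. -/
def subdiff (f : E → EReal) (x : E) : Set E :=
  {u | ∀ y, ((⟪y - x, u⟫ : ℝ) : EReal) + f x ≤ f y}

/-- The Fenchel conjugate of `f`. -/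
def conj (f : E → EReal) (u : E) : EReal := ⨆ x, ((⟪x, u⟫ : ℝ) : EReal) - f x

/-! The zero of `A + B` is `p = (x, w)`, read off the qualification condition, together with
`-B p ∈ A p`.  The first component of this inclusion is the identity defining `z`; for the
others, write `Lᵢ x - rᵢ = aᵢ + bᵢ` with `wᵢ ∈ ∂gᵢ(aᵢ) ∩ ∂ℓᵢ(bᵢ)`.  Inverting subdifferentials
(`u ∈ ∂φ(a) → a ∈ ∂φ*(u)`, which needs only the Fenchel–Young inequality) gives `aᵢ ∈ ∂gᵢ*(wᵢ)`
and `bᵢ ∈ ∂ℓᵢ*(wᵢ)`, and since `ℓᵢ*` is differentiable its only subgradient is its gradient, so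
`bᵢ = ∇ℓᵢ*(wᵢ)`. -/

theorem inner_sub_le_conj (f : E → EReal) (x u : E) : ((⟪x, u⟫ : ℝ) : EReal) - f x ≤ conj f u :=
  le_iSup (fun y => ((⟪y, u⟫ : ℝ) : EReal) - f y) x

section

variable {f : E → EReal} {a u : E}

theorem conj_le_of_mem_subdiff (hu : u ∈ subdiff f a) :
    conj f u ≤ ((⟪a, u⟫ : ℝ) : EReal) - f a := by
  refine iSup_le fun x => ?_
  have hx := hu x
  induction hfa : f a using EReal.rec with
  | bot => simp
  | top =>
    rw [hfa, EReal.coe_add_top, top_le_iff] at hx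
    simp [hx]
  | coe c =>
    rw [hfa] at hx
    rw [← EReal.coe_sub,
      EReal.sub_le_iff_le_add (.inr (EReal.coe_ne_top _)) (.inr (EReal.coe_ne_bot _))]
    calc ((⟪x, u⟫ : ℝ) : EReal)
        = ((⟪a, u⟫ - c : ℝ) : EReal) + (((⟪x - a, u⟫ : ℝ) : EReal) + c) := by
          norm_cast; rw [inner_sub_left]; ring
      _ ≤ _ := add_le_add_right hx _

theorem mem_subdiff_conj_of_mem_subdiff (hu : u ∈ subdiff f a) : a ∈ subdiff (conj f) u := by
  intro v
  calc ((⟪v - u, a⟫ : ℝ) : EReal) + conj f u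
      ≤ ((⟪v - u, a⟫ : ℝ) : EReal) + (((⟪a, u⟫ : ℝ) : EReal) - f a) := by
        gcongr; exact conj_le_of_mem_subdiff hu
    _ = ((⟪a, v⟫ : ℝ) : EReal) - f a := by
        rw [← add_sub_assoc, ← EReal.coe_add, inner_sub_left, real_inner_comm a v,
          real_inner_comm a u, sub_add_cancel]
    _ ≤ conj f v := inner_sub_le_conj f a v

theorem eq_of_mem_subdiff_of_hasGradientAt [CompleteSpace E] {φ : E → ℝ} {w b g : E}
    (hb : b ∈ subdiff (fun v => (φ v : EReal)) w) (hg : HasGradientAt φ g w) : b = g := by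
  have hmin : IsLocalMin (fun v => φ v - ⟪b, v⟫) w := Filter.Eventually.of_forall fun v => by
    have hv : ⟪v - w, b⟫ + φ w ≤ φ v := by have := hb v; dsimp only at this; exact_mod_cast this
    rw [inner_sub_left, real_inner_comm b, real_inner_comm b] at hv
    linarith
  have hderiv := (hasGradientAt_iff_hasFDerivAt.mp hg).sub (innerSL ℝ b).hasFDerivAt
  have hzero := congrArg (fun T => T (g - b)) (hmin.hasFDerivAt_eq_zero hderiv)
  simp only [sub_apply, InnerProductSpace.toDual_apply_apply, innerSL_apply_apply, zero_apply,
    ← inner_sub_left, inner_self_eq_zero, sub_eq_zero] at hzero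
  exact hzero.symm

end

theorem statement10_general
    {H : Type*} [NormedAddCommGroup H] [InnerProductSpace ℝ H] [CompleteSpace H]
    {m : ℕ}
    {G : Fin m → Type*} [∀ i, NormedAddCommGroup (G i)] [∀ i, InnerProductSpace ℝ (G i)]
    [∀ i, CompleteSpace (G i)]
    (z : H)
    (f : H → EReal)
    (h' : H → H)
    (r : ∀ i, G i)
    (g : ∀ i, G i → EReal)
    (l : ∀ i, G i → EReal)
    (L : ∀ i, H →L[ℝ] G i)
    (lstar : ∀ i, G i → ℝ) (hlstar : ∀ i, ∀ v : G i, (lstar i v : EReal) = conj (l i) v)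
    (lgrad : ∀ i, G i → G i) (hlgrad : ∀ i, ∀ v : G i, HasGradientAt (lstar i) (lgrad i v) v)
    -- the qualification condition (10) of Problem 2 :
    -- z ∈ ran(∂f + Σᵢ Lᵢ*(∂gᵢ □ ∂ℓᵢ)(Lᵢ · − rᵢ) + ∇h)
    (hran : ∃ x : H, ∃ u ∈ subdiff f x, ∃ w : ∀ i, G i,
      (∀ i, ∃ a b : G i, L i x - r i = a + b ∧ w i ∈ subdiff (g i) a ∧ w i ∈ subdiff (l i) b) ∧
      z = u + ∑ i, ContinuousLinearMap.adjoint (L i) (w i) + h' x)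
    -- the operators A and B on 𝒦 = ℋ ⊕ 𝒢₁ ⊕ ⋯ ⊕ 𝒢ₘ
    (A : (H × ∀ i, G i) → Set (H × ∀ i, G i))
    (hA : ∀ p q : H × ∀ i, G i, q ∈ A p ↔
      (q.1 - ∑ i, ContinuousLinearMap.adjoint (L i) (p.2 i) + z ∈ subdiff f p.1) ∧
      ∀ i, q.2 i + L i p.1 - r i ∈ subdiff (conj (g i)) (p.2 i))
    (B : (H × ∀ i, G i) → H × ∀ i, G i)
    (hB : ∀ p : H × ∀ i, G i, B p = (h' p.1, fun i => lgrad i (p.2 i))) :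
    -- zer(A + B) is nonempty
    ∃ p : H × ∀ i, G i, ∃ a ∈ A p, a + B p = 0 := by
  obtain ⟨x, u, hu, w, hw, hz⟩ := hran
  refine ⟨(x, w), (-h' x, fun i => -lgrad i (w i)), (hA _ _).2 ⟨?_, fun i => ?_⟩,
    by ext <;> simp [hB]⟩
  · convert hu using 1
    dsimp only
    rw [hz]
    abel
  · obtain ⟨a, b, hab, hga, hlb⟩ := hw i
    have hlb' : b ∈ subdiff (fun v => (lstar i v : EReal)) (w i) := by
      rw [funext (hlstar i)]
      exact mem_subdiff_conj_of_mem_subdiff hlb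
    have hb : b = lgrad i (w i) := eq_of_mem_subdiff_of_hasGradientAt hlb' (hlgrad i (w i))
    convert mem_subdiff_conj_of_mem_subdiff hga using 1
    dsimp only
    rw [← hb, add_sub_assoc, hab]
    abel

/-- Under the assumptions of Problem 2, in particular the qualification
condition `z ∈ ran(∂f + Σᵢ Lᵢ*(∂gᵢ □ ∂ℓᵢ)(Lᵢ · − rᵢ) + ∇h)`, the set `zer(A + B)` is nonempty,
where `A(x,v) = (∂f(x) − z + Σᵢ Lᵢ* vᵢ) × ∏ᵢ(−Lᵢ x + ∂gᵢ*(vᵢ) + rᵢ)` and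
`B(x,v) = (∇h(x), ∇ℓ₁*(v₁), …, ∇ℓₘ*(vₘ))` on `𝒦 = ℋ ⊕ 𝒢₁ ⊕ ⋯ ⊕ 𝒢ₘ`.
(`hh` is the function `h`, `h'` its gradient, `lstar i` the — real-valued —
conjugate `ℓᵢ*`, and `lgrad i` its gradient.) -/
theorem statement10
    {H : Type*} [NormedAddCommGroup H] [InnerProductSpace ℝ H] [CompleteSpace H]
    {m : ℕ} (hm : 0 < m)
    {G : Fin m → Type*} [∀ i, NormedAddCommGroup (G i)] [∀ i, InnerProductSpace ℝ (G i)]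
    [∀ i, CompleteSpace (G i)]
    (z : H)
    (f : H → EReal) (hf : Gamma0 f)
    (hh : H → ℝ) (hhconv : ConvexOn ℝ Set.univ hh)
    (h' : H → H) (hh' : ∀ x, HasGradientAt hh (h' x) x)
    (βh : ℝ) (hβh : 0 < βh) (hhlip : LipschitzWith βh.toNNReal h')
    (r : ∀ i, G i)
    (g : ∀ i, G i → EReal) (hg : ∀ i, Gamma0 (g i))
    (l : ∀ i, G i → EReal) (hl : ∀ i, Gamma0 (l i)) (hlsc : ∀ i, StronglyConvexE (l i))
    (L : ∀ i, H →L[ℝ] G i) (hL : ∀ i, L i ≠ 0)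
    (lstar : ∀ i, G i → ℝ) (hlstar : ∀ i, ∀ v : G i, (lstar i v : EReal) = conj (l i) v)
    (lgrad : ∀ i, G i → G i) (hlgrad : ∀ i, ∀ v : G i, HasGradientAt (lstar i) (lgrad i v) v)
    (ν : Fin m → ℝ) (hν : ∀ i, 0 < ν i) (hliplg : ∀ i, LipschitzWith (ν i).toNNReal (lgrad i))
    -- the qualification condition (10) of Problem 2 :
    -- z ∈ ran(∂f + Σᵢ Lᵢ*(∂gᵢ □ ∂ℓᵢ)(Lᵢ · − rᵢ) + ∇h)
    (hran : ∃ x : H, ∃ u ∈ subdiff f x, ∃ w : ∀ i, G i,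
      (∀ i, ∃ a b : G i, L i x - r i = a + b ∧ w i ∈ subdiff (g i) a ∧ w i ∈ subdiff (l i) b) ∧
      z = u + ∑ i, ContinuousLinearMap.adjoint (L i) (w i) + h' x)
    -- the operators A and B on 𝒦 = ℋ ⊕ 𝒢₁ ⊕ ⋯ ⊕ 𝒢ₘ
    (A : (H × ∀ i, G i) → Set (H × ∀ i, G i))
    (hA : ∀ p q : H × ∀ i, G i, q ∈ A p ↔
      (q.1 - ∑ i, ContinuousLinearMap.adjoint (L i) (p.2 i) + z ∈ subdiff f p.1) ∧
      ∀ i, q.2 i + L i p.1 - r i ∈ subdiff (conj (g i)) (p.2 i))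
    (B : (H × ∀ i, G i) → H × ∀ i, G i)
    (hB : ∀ p : H × ∀ i, G i, B p = (h' p.1, fun i => lgrad i (p.2 i))) :
    -- zer(A + B) is nonempty
    ∃ p : H × ∀ i, G i, ∃ a ∈ A p, a + B p = 0 :=
  statement10_general z f h' r g l L lstar hlstar lgrad hlgrad hran A hA B hB
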